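/- Let b ∈ (0,1) with g(b) < 0. Define M(b,R) = inf { F^lin_{b,Q_R}(u) / (∫_{Q_R}|u|⁴)^{1/2} : u ∈ H¹₀(Q_R) \ {0} }, where F^lin_{b,Q_R}(u) = ∫_{Q_R}( b|(∇-iF)u|² - |u|² )dx. Then for all R > 1, M(b,R) ≥ -R^{3/2}(-2g(b))^{1/2}. -/

import Mathlib

open MeasureTheory Complex

noncomputable section

/-- Three-dimensional Euclidean space. -/
abbrev V3 := EuclideanSpace ℝ (Fin 3)

/-- The magnetic potential `F(x) = (-x₂/2, x₁/2, 0)`. -/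
def Fpot : V3 → V3 := fun x => (EuclideanSpace.equiv (Fin 3) ℝ).symm ![-(x 1) / 2, x 0 / 2, 0]

/-- The `j`-th component of the magnetic gradient `(∇ - i a)u` at `x`. -/
def magD (a : V3 → V3) (u : V3 → ℂ) (j : Fin 3) (x : V3) : ℂ :=
  fderiv ℝ u x (EuclideanSpace.single j 1) - Complex.I * (a x j : ℝ) * u x

/-- The open cube `Q_R = (-R/2, R/2)³`. -/
def cube (R : ℝ) : Set V3 := {x | ∀ j, |x j| < R / 2}

/-- Smooth compactly supported functions in `Q_R`: the core of `H¹₀(Q_R; ℂ)`. -/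
def H10 (R : ℝ) : Set (V3 → ℂ) :=
  {u | ContDiff ℝ 1 u ∧ HasCompactSupport u ∧ tsupport u ⊆ cube R}

/-- The linear part `F^lin_{b,Q_R}(u) = ∫_{Q_R} ( b|(∇ - iF)u|² - |u|² ) dx`. -/
def GLlin (b R : ℝ) (u : V3 → ℂ) : ℝ :=
  ∫ x in cube R, (b * ∑ j, ‖magD Fpot u j x‖ ^ 2 - ‖u x‖ ^ 2)

/-- The full reduced Ginzburg–Landau functional `F_{b,Q_R} = F^lin + ½∫|u|⁴`. -/
def GLfun (b R : ℝ) (u : V3 → ℂ) : ℝ :=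
  GLlin b R u + (1 / 2) * ∫ x in cube R, ‖u x‖ ^ 4

/-- The 3D Dirichlet ground-state energy `M₀(b,R)`. -/
def M0 (b R : ℝ) : ℝ := sInf (GLfun b R '' H10 R)

/-- The non-linear eigenvalue `𝓜₀(b,R) = inf F^lin(u)/(∫|u|⁴)^{1/2}` over nonzero
`u ∈ H¹₀(Q_R)`. -/
def Mcal (b R : ℝ) : ℝ :=
  sInf ((fun u => GLlin b R u / Real.sqrt (∫ x in cube R, ‖u x‖ ^ 4)) ''
    {u | u ∈ H10 R ∧ u ≠ 0})


/-!
Scaling `u ↦ √s u` turns the energy bound `g(b) R³ ≤ M₀(b,R) ≤ F_{b,Q_R}(√s u)` into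
`g(b) R³ ≤ s A + s² B / 2` for all `s ≥ 0`, where `A = F^lin(u)` and `B = ∫|u|⁴`.
Minimising the right-hand side over `s` (at `s = -A/B` when `A < 0`) gives
`A² ≤ -2 g(b) R³ B`, i.e. `A / √B ≥ -R^{3/2} (-2g(b))^{1/2}`.
-/

lemma neg_sqrt_le_div_sqrt_of_forall_le_quadratic {A B c : ℝ} (hB : 0 ≤ B)
    (h : ∀ s, 0 ≤ s → c ≤ s * A + s ^ 2 * B / 2) : -√(-2 * c) ≤ A / √B := by
  have hc : c ≤ 0 := by simpa using h 0 le_rfl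
  rcases hB.eq_or_lt with rfl | hB
  · simp
  rcases le_or_gt 0 A with hA | hA
  · exact (neg_nonpos.2 (Real.sqrt_nonneg _)).trans (by positivity)
  have hmin : c ≤ -A ^ 2 / (2 * B) := by
    convert h (-A / B) (div_nonneg (neg_nonneg.2 hA.le) hB.le) using 1
    field_simp
    ring
  have hA2 : A ^ 2 ≤ -2 * c * B := by
    rw [le_div_iff₀ (by positivity)] at hmin
    linarith
  have hsqrt : -A ≤ √(-2 * c) * √B := by
    rw [← Real.sqrt_mul (by linarith), ← abs_of_neg hA, ← Real.sqrt_sq_eq_abs]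
    exact Real.sqrt_le_sqrt hA2
  rw [le_div_iff₀ (Real.sqrt_pos.2 hB)]
  linarith

lemma rpow_three_halves_mul_sqrt {R : ℝ} (hR : 0 ≤ R) (y : ℝ) :
    R ^ ((3 : ℝ) / 2) * √y = √(y * R ^ 3) := by
  rw [mul_comm y, Real.sqrt_mul (by positivity), Real.sqrt_eq_rpow (R ^ 3), ← Real.rpow_natCast,
    ← Real.rpow_mul hR]
  norm_num

lemma isBounded_cube (R : ℝ) : Bornology.IsBounded (cube R) := by
  have hcube :
      cube R = WithLp.ofLp ⁻¹' Set.univ.pi fun _ : Fin 3 => Set.Ioo (-(R / 2)) (R / 2) := by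
    ext x
    simp [cube, abs_lt]
  rw [hcube]
  exact (PiLp.antilipschitzWith_ofLp 2 _).isBounded_preimage
    (Bornology.IsBounded.pi fun _ => Metric.isBounded_Ioo _ _)

lemma Continuous.integrableOn_cube {f : V3 → ℝ} (hf : Continuous f) (R : ℝ) :
    IntegrableOn f (cube R) :=
  (hf.continuousOn.integrableOn_compact (isBounded_cube R).isCompact_closure).mono_set
    subset_closure

lemma continuous_Fpot : Continuous Fpot :=
  (EuclideanSpace.equiv (Fin 3) ℝ).symm.continuous.comp <| continuous_pi fun j => by
    fin_cases j <;> simp <;> fun_prop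

lemma continuous_magD {a : V3 → V3} (ha : Continuous a) {u : V3 → ℂ} (hu : ContDiff ℝ 1 u)
    (j : Fin 3) : Continuous (magD a u j) :=
  ((hu.continuous_fderiv one_ne_zero).clm_apply continuous_const).sub
    ((continuous_const.mul (continuous_ofReal.comp
      ((EuclideanSpace.proj j).continuous.comp ha))).mul hu.continuous)

lemma magD_const_mul (a : V3 → V3) (c : ℂ) {u : V3 → ℂ} (hu : Differentiable ℝ u) (j : Fin 3)
    (x : V3) : magD a (fun y => c * u y) j x = c * magD a u j x := by
  simp only [magD, fderiv_const_mul (hu x), smul_apply, smul_eq_mul]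
  ring

lemma const_mul_mem_H10 {R : ℝ} (c : ℂ) {u : V3 → ℂ} (hu : u ∈ H10 R) :
    (fun x => c * u x) ∈ H10 R :=
  ⟨contDiff_const.mul hu.1, hu.2.1.mul_left,
    (closure_mono (Function.support_mul_subset_right _ _)).trans hu.2.2⟩

lemma GLlin_ofReal_mul (b R t : ℝ) {u : V3 → ℂ} (hu : Differentiable ℝ u) :
    GLlin b R (fun x => (t : ℂ) * u x) = t ^ 2 * GLlin b R u := by
  rw [GLlin, GLlin, ← integral_const_mul]
  congr 1 with x
  simp only [magD_const_mul Fpot _ hu, norm_mul, norm_real, Real.norm_eq_abs, mul_pow, sq_abs,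
    ← Finset.mul_sum]
  ring

lemma integral_norm_ofReal_mul_pow_four (R t : ℝ) (u : V3 → ℂ) :
    ∫ x in cube R, ‖(t : ℂ) * u x‖ ^ 4 = t ^ 4 * ∫ x in cube R, ‖u x‖ ^ 4 := by
  rw [← integral_const_mul]
  congr 1 with x
  rw [norm_mul, norm_real, Real.norm_eq_abs, mul_pow, Even.pow_abs ⟨2, rfl⟩]

lemma neg_volume_div_two_le_GLfun {b R : ℝ} (hb : 0 ≤ b) {u : V3 → ℂ} (hu : u ∈ H10 R) :
    -volume.real (cube R) / 2 ≤ GLfun b R u := by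
  have hlin : IntegrableOn (fun x => b * ∑ j, ‖magD Fpot u j x‖ ^ 2 - ‖u x‖ ^ 2) (cube R) :=
    ((continuous_const.mul (continuous_finsetSum _ fun j _ =>
      (continuous_magD continuous_Fpot hu.1 j).norm.pow 2)).sub
      (hu.1.continuous.norm.pow 2)).integrableOn_cube R
  have hquart : IntegrableOn (fun x => ‖u x‖ ^ 4 / 2) (cube R) :=
    (hu.1.continuous.norm.pow 4).div_const 2 |>.integrableOn_cube R
  have hdensity : ∀ x,
      -(1 / 2 : ℝ) ≤ (b * ∑ j, ‖magD Fpot u j x‖ ^ 2 - ‖u x‖ ^ 2) + ‖u x‖ ^ 4 / 2 := fun x => by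
    have : 0 ≤ b * ∑ j, ‖magD Fpot u j x‖ ^ 2 := by positivity
    nlinarith [sq_nonneg (‖u x‖ ^ 2 - 1)]
  calc -volume.real (cube R) / 2 = ∫ _ in cube R, -(1 / 2 : ℝ) := by
        rw [setIntegral_const, smul_eq_mul]
        ring
    _ ≤ ∫ x in cube R, ((b * ∑ j, ‖magD Fpot u j x‖ ^ 2 - ‖u x‖ ^ 2) + ‖u x‖ ^ 4 / 2) :=
        setIntegral_mono (integrableOn_const (isBounded_cube R).measure_lt_top.ne)
          (hlin.add hquart) hdensity
    _ = GLfun b R u := by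
        rw [integral_add hlin hquart, integral_div, GLfun, GLlin]
        ring

lemma M0_le_GLfun {b R : ℝ} (hb : 0 ≤ b) {u : V3 → ℂ} (hu : u ∈ H10 R) : M0 b R ≤ GLfun b R u :=
  csInf_le ⟨_, Set.forall_mem_image.2 fun _ hv => neg_volume_div_two_le_GLfun hb hv⟩ ⟨u, hu, rfl⟩

lemma M0_le_quadratic {b R s : ℝ} (hb : 0 ≤ b) (hs : 0 ≤ s) {u : V3 → ℂ} (hu : u ∈ H10 R) :
    M0 b R ≤ s * GLlin b R u + s ^ 2 * (∫ x in cube R, ‖u x‖ ^ 4) / 2 := by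
  have hsqrt : (√s) ^ 2 = s := Real.sq_sqrt hs
  calc M0 b R ≤ GLfun b R (fun x => (√s : ℂ) * u x) := M0_le_GLfun hb (const_mul_mem_H10 _ hu)
    _ = s * GLlin b R u + s ^ 2 * (∫ x in cube R, ‖u x‖ ^ 4) / 2 := by
      rw [GLfun, GLlin_ofReal_mul _ _ _ (hu.1.differentiable one_ne_zero),
        integral_norm_ofReal_mul_pow_four, hsqrt, show (√s) ^ 4 = ((√s) ^ 2) ^ 2 by ring, hsqrt]
      ring

theorem stmt_3_general (g : ℝ → ℝ) (b : ℝ) (hb : b ∈ Set.Ioo (0 : ℝ) 1)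
    (hlow : ∀ R ≥ (1 : ℝ), g b ≤ M0 b R / R ^ 3) :
    ∀ R > (1 : ℝ), Mcal b R ≥ -(R ^ ((3 : ℝ) / 2)) * Real.sqrt (-2 * g b) := by
  intro R hR
  have hR0 : 0 < R := by linarith
  have hM0 : g b * R ^ 3 ≤ M0 b R := (le_div_iff₀ (by positivity)).1 (hlow R hR.le)
  rw [neg_mul, rpow_three_halves_mul_sqrt hR0.le, mul_assoc, Mcal]
  refine Real.le_sInf ?_ (neg_nonpos.2 (Real.sqrt_nonneg _))
  rintro _ ⟨u, ⟨hu, -⟩, rfl⟩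
  exact neg_sqrt_le_div_sqrt_of_forall_le_quadratic (integral_nonneg fun _ => by positivity)
    fun s hs => hM0.trans (M0_le_quadratic hb.1.le hs hu)

/-- for `b ∈ (0,1)` with `g(b) ∈ [-1/2, 0)` and `g(b) ≤ M₀(b,R)/R³` for all
`R ≥ 1`, one has `𝓜₀(b,R) ≥ -R^{3/2}(-2g(b))^{1/2}` for all `R > 1`. -/
theorem stmt_3 (g : ℝ → ℝ) (b : ℝ) (hb : b ∈ Set.Ioo (0 : ℝ) 1)
    (hgb : g b ∈ Set.Ico (-(1 / 2) : ℝ) 0)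
    (hlow : ∀ R ≥ (1 : ℝ), g b ≤ M0 b R / R ^ 3) :
    ∀ R > (1 : ℝ), Mcal b R ≥ -(R ^ ((3 : ℝ) / 2)) * Real.sqrt (-2 * g b) :=
  stmt_3_general g b hb hlow
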